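/- Let X be a real Hilbert space and G a group of linear isometric bijections of X. Let E, C : X → ℝ be continuous, G-invariant, with E(0) = C(0) = 0, both satisfying the splitting property, and with E coercive: E(u) > 0 for every u ≠ 0, E(u_n) → ∞ whenever ‖u_n‖ → ∞, and ‖u_n‖ → 0 whenever E(u_n) → 0. Assume the hylomorphy condition inf{Λ(u) : u ∈ X, C(u) ≠ 0} < Λ₀. Let γ : ℝ → X → X be a family of maps that preserves E and C (E(γ_t u) = E(u) and C(γ_t u) = C(u) for all t, u). Then for every δ ∈ (0, δ_∞) there exist e_δ > 0 and c_δ > 0 such that the set Γ(e_δ, c_δ) = {u ∈ X : E(u) = e_δ and |C(u)| = c_δ} is nonempty, does not contain 0, is invariant under γ, is G-compact, consists of minimizers of E on {u : |C(u)| = c_δ}, and is stable: for every ε > 0 there exists η > 0 such that d(u, Γ(e_δ, c_δ)) ≤ η implies d(γ_t u, Γ(e_δ, c_δ)) ≤ ε for all t ≥ 0, where d is the metric induced by the norm of X. -/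

import Mathlib

open Filter Topology

variable {X : Type*} [NormedAddCommGroup X] [InnerProductSpace ℝ X]

/-- A sequence in a real inner product space converges weakly to `0`. -/
def WeakNullSeq (w : ℕ → X) : Prop :=
  ∀ v : X, Tendsto (fun n => (inner ℝ v (w n) : ℝ)) atTop (𝓝 0)

/-- A functional `F : X → ℝ` has the splitting property. -/
def SplittingProperty (F : X → ℝ) : Prop :=
  ∀ (u : X) (w : ℕ → X), WeakNullSeq w →
    Tendsto (fun n => F (u + w n) - F u - F (w n)) atTop (𝓝 0)

/-- The hylenic ratio `Λ(u) = E(u)/|C(u)|`. -/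
noncomputable def hylenicRatio (E C : X → ℝ) (u : X) : ℝ := E u / |C u|

/-- A sequence `(u n)` is `G`-vanishing: it is norm-bounded and for every
subsequence `(u (φ k))` and every sequence `(g k)` in `G`, `g k (u (φ k))`
converges weakly to `0`. -/
def GVanishing (G : Subgroup (X ≃ₗᵢ[ℝ] X)) (u : ℕ → X) : Prop :=
  (∃ M : ℝ, ∀ n, ‖u n‖ ≤ M) ∧
  ∀ φ : ℕ → ℕ, StrictMono φ → ∀ g : ℕ → G,
    WeakNullSeq (fun k => (g k : X ≃ₗᵢ[ℝ] X) (u (φ k)))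

/-- `Λ₀`: the infimum of `liminf Λ(u n)` over all `G`-vanishing sequences
with `C (u n) ≠ 0` for all `n`. -/
noncomputable def Lambda0 (G : Subgroup (X ≃ₗᵢ[ℝ] X)) (E C : X → ℝ) : ℝ :=
  sInf {l : ℝ | ∃ u : ℕ → X, GVanishing G u ∧ (∀ n, C (u n) ≠ 0) ∧
    l = liminf (fun n => hylenicRatio E C (u n)) atTop}

/-- `J_δ(u) = Λ(u) + δ E(u)`. -/
noncomputable def Jfun (E C : X → ℝ) (δ : ℝ) (u : X) : ℝ :=
  hylenicRatio E C u + δ * E u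

/-- A sequence is `G`-compact: some subsequence, translated by elements of `G`,
is norm-convergent. -/
def GCompactSeq (G : Subgroup (X ≃ₗᵢ[ℝ] X)) (u : ℕ → X) : Prop :=
  ∃ φ : ℕ → ℕ, StrictMono φ ∧ ∃ g : ℕ → G, ∃ L : X,
    Tendsto (fun k => (g k : X ≃ₗᵢ[ℝ] X) (u (φ k))) atTop (𝓝 L)

/-- `δ` lies in the interval `(0, δ_∞)`, where
`δ_∞ = sup {δ > 0 | ∃ v, C v ≠ 0 ∧ J_δ(v) < Λ₀}`; equivalently (since `E ≥ 0`
makes the set below an interval) there is `δ' > δ` in that set. -/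
def MemDeltaInterval (G : Subgroup (X ≃ₗᵢ[ℝ] X)) (E C : X → ℝ) (δ : ℝ) : Prop :=
  0 < δ ∧ ∃ δ' : ℝ, δ < δ' ∧ ∃ v : X, C v ≠ 0 ∧ Jfun E C δ' v < Lambda0 G E C

/-- The hylomorphy condition `inf {Λ(u) | C u ≠ 0} < Λ₀`. -/
def HylomorphyCondition (G : Subgroup (X ≃ₗᵢ[ℝ] X)) (E C : X → ℝ) : Prop :=
  sInf {r : ℝ | ∃ u : X, C u ≠ 0 ∧ r = hylenicRatio E C u} < Lambda0 G E C

/-!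
Minimise `J_δ` over `{C ≠ 0}`; its infimum `m` lies below `Λ₀`. Along a minimising sequence `E`
is bounded (as `J_δ ≥ δ E`), hence so is the norm, and since `Λ ≤ J_δ` the sequence is not
`G`-vanishing: after translating by `G` and passing to a subsequence it converges weakly to some
`w ≠ 0`. Because `(m - δ E u) |C u| ≤ E u` for every `u`, splitting `E` and `C` at `w` shows that
energy lost in the weak limit would force `|C| → 0`, hence `E → 0`, along the sequence; so no
energy is lost, `E (u_k - w) → 0`, and the convergence is strong with `w` a minimiser.
`Γ` is the level set of `(E, |C|)` through a minimiser; its points minimise `J_δ`, hence `E` at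
fixed `|C|`, and sequences along which `(E, |C|)` tends to its value on `Γ` are `G`-compact. So
being close to `Γ` amounts to `(E, |C|)` being close to its value on `Γ`, which `γ` preserves.
-/

theorem liminf_nonneg_of_eventually_nonneg {β : Type*} {f : Filter β} {u : β → ℝ}
    (h : ∀ᶠ x in f, 0 ≤ u x) : 0 ≤ liminf u f := by
  rw [liminf_eq]
  by_cases hb : BddAbove {a : ℝ | ∀ᶠ x in f, a ≤ u x}
  · exact le_csSup hb h
  · rw [Real.sSup_of_not_bddAbove hb]

theorem tendsto_zero_of_sub_mul_le {β : Type*} {f : Filter β} {Λ c ρ : β → ℝ} {l κ : ℝ}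
    (hΛ : Tendsto Λ f (𝓝 l)) (hlκ : l < κ) (hc : ∀ x, 0 ≤ c x) (hρ : Tendsto ρ f (𝓝 0))
    (h : ∀ᶠ x in f, (κ - Λ x) * c x ≤ ρ x) : Tendsto c f (𝓝 0) := by
  obtain ⟨d, hd, hdl⟩ : ∃ d > 0, l < κ - d := ⟨(κ - l) / 2, by linarith, by linarith⟩
  have hΛd : ∀ᶠ x in f, Λ x < κ - d := hΛ.eventually (gt_mem_nhds hdl)
  refine squeeze_zero' (Eventually.of_forall hc) ?_ (by simpa using hρ.div_const d)
  filter_upwards [h, hΛd] with x hx hΛx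
  rw [le_div_iff₀ hd]
  nlinarith [hc x]

theorem exists_norm_le_of_le {V : Type*} [Norm V] {E : V → ℝ}
    (hE : ∀ u : ℕ → V, Tendsto (fun n => ‖u n‖) atTop atTop →
      Tendsto (fun n => E (u n)) atTop atTop) (b : ℝ) :
    ∃ R : ℝ, ∀ u, E u ≤ b → ‖u‖ ≤ R := by
  by_contra! h
  choose u hub hu using fun n : ℕ => h n
  have hu' := hE u (tendsto_atTop_mono (fun n => (hu n).le) tendsto_natCast_atTop_atTop)
  obtain ⟨n, hn⟩ := (hu'.eventually_gt_atTop b).exists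
  exact (hub n).not_gt hn

theorem WeakNullSeq.comp {w : ℕ → X} (hw : WeakNullSeq w) {φ : ℕ → ℕ}
    (hφ : Tendsto φ atTop atTop) : WeakNullSeq (w ∘ φ) :=
  fun v => (hw v).comp hφ

open InnerProductSpace in
/-- Sequential Banach–Alaoglu on the closed span of the sequence, transported back by Riesz. -/
theorem exists_subseq_weakNullSeq_sub [CompleteSpace X] {v : ℕ → X} {M : ℝ}
    (hM : ∀ n, ‖v n‖ ≤ M) :
    ∃ φ : ℕ → ℕ, StrictMono φ ∧ ∃ w : X, WeakNullSeq (fun k => v (φ k) - w) := by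
  set Y := (Submodule.span ℝ (Set.range v)).topologicalClosure
  have : TopologicalSpace.SeparableSpace Y :=
    (Set.countable_range v).isSeparable.span.closure.separableSpace
  have : CompleteSpace Y :=
    (Submodule.span ℝ (Set.range v)).isClosed_topologicalClosure.completeSpace_coe
  have hvY : ∀ n, v n ∈ Y := fun n =>
    Submodule.le_topologicalClosure _ (Submodule.subset_span ⟨n, rfl⟩)
  let f : ℕ → WeakDual ℝ Y := fun n => StrongDual.toWeakDual (toDual ℝ Y ⟨v n, hvY n⟩)
  have hf : ∀ n, f n ∈ WeakDual.toStrongDual ⁻¹' Metric.closedBall 0 M := fun n => by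
    rw [Set.mem_preimage, Metric.mem_closedBall]
    exact (dist_zero_right _).trans_le (((toDual ℝ Y).norm_map _).trans_le (hM n))
  obtain ⟨f₀, -, φ, hφ, hlim⟩ := WeakDual.isSeqCompact_closedBall ℝ Y 0 M hf
  set w : Y := (toDual ℝ Y).symm (WeakDual.toStrongDual f₀)
  refine ⟨φ, hφ, w, fun x => ?_⟩
  have hx : ∀ y : Y, toDual ℝ Y y (Y.orthogonalProjectionOnto x) = inner ℝ x (y : X) := by
    intro y
    rw [toDual_apply_apply, Submodule.inner_orthogonalProjectionOnto_eq_of_mem_left,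
      real_inner_comm]
  have hf₀ : f₀ (Y.orthogonalProjectionOnto x) = inner ℝ x (w : X) := by
    rw [← hx, (toDual ℝ Y).apply_symm_apply]
    rfl
  have hfx : ∀ n, f n (Y.orthogonalProjectionOnto x) = inner ℝ x (v n) :=
    fun n => hx ⟨v n, hvY n⟩
  have h := ((WeakDual.eval_continuous (Y.orthogonalProjectionOnto x)).tendsto f₀).comp hlim
  simp only [Function.comp_def, hfx, hf₀] at h
  simpa only [inner_sub_right, sub_self] using h.sub_const (inner ℝ x (w : X))

theorem exists_subseq_weakNullSeq_sub_ne_zero [CompleteSpace X] {v : ℕ → X} {M : ℝ}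
    (hM : ∀ n, ‖v n‖ ≤ M) (hv : ¬ WeakNullSeq v) :
    ∃ φ : ℕ → ℕ, StrictMono φ ∧ ∃ w ≠ 0, WeakNullSeq (fun k => v (φ k) - w) := by
  obtain ⟨x, hx⟩ := not_forall.1 hv
  obtain ⟨s, hs, hfreq⟩ := not_tendsto_iff_exists_frequently_notMem.1 hx
  obtain ⟨ψ, hψ, hψs⟩ := extraction_of_frequently_atTop hfreq
  obtain ⟨φ, hφ, w, hw⟩ := exists_subseq_weakNullSeq_sub fun k => hM (ψ k)
  refine ⟨ψ ∘ φ, hψ.comp hφ, w, ?_, hw⟩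
  rintro rfl
  have hxs : ∀ᶠ k in atTop, inner ℝ x (v (ψ (φ k))) ∈ s := by
    simpa only [sub_zero] using (hw x).eventually_mem hs
  obtain ⟨k, hk⟩ := hxs.exists
  exact hψs (φ k) hk

theorem SplittingProperty.tendsto_sub_sub {F : X → ℝ} (hF : SplittingProperty F) {U : ℕ → X}
    {w : X} (hU : WeakNullSeq fun k => U k - w) :
    Tendsto (fun k => F (U k) - F w - F (U k - w)) atTop (𝓝 0) := by
  simpa only [add_sub_cancel] using hF w _ hU

theorem SplittingProperty.tendsto_sub {F : X → ℝ} (hF : SplittingProperty F) {U : ℕ → X}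
    {w : X} (hU : WeakNullSeq fun k => U k - w) {e : ℝ}
    (hFU : Tendsto (fun k => F (U k)) atTop (𝓝 e)) :
    Tendsto (fun k => F (U k - w)) atTop (𝓝 (e - F w)) := by
  simpa using (hFU.sub_const (F w)).sub (hF.tendsto_sub_sub hU)

section HylenicRatio

variable {α : Type*} {E C : α → ℝ} {δ m : ℝ}

theorem hylenicRatio_nonneg (hE : ∀ u, 0 ≤ E u) (u : α) : 0 ≤ hylenicRatio E C u :=
  div_nonneg (hE u) (abs_nonneg _)

theorem hylenicRatio_mul_abs {u : α} (hu : C u ≠ 0) : hylenicRatio E C u * |C u| = E u :=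
  div_mul_cancel₀ _ (abs_ne_zero.2 hu)

theorem Jfun_sub_mul (u : α) : Jfun E C δ u - δ * E u = hylenicRatio E C u :=
  add_sub_cancel_right _ _

theorem mul_le_Jfun (hE : ∀ u, 0 ≤ E u) (u : α) : δ * E u ≤ Jfun E C δ u :=
  le_add_of_nonneg_left (hylenicRatio_nonneg hE u)

/-- The bound `m ≤ J_δ` rewritten so that it also holds, trivially, where `C u = 0`. -/
theorem sub_mul_mul_abs_le (hE : ∀ u, 0 ≤ E u) (hmin : ∀ u, C u ≠ 0 → m ≤ Jfun E C δ u)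
    (u : α) : (m - δ * E u) * |C u| ≤ E u := by
  rcases eq_or_ne (C u) 0 with h | h
  · simpa [h] using hE u
  · calc (m - δ * E u) * |C u| ≤ hylenicRatio E C u * |C u| := by
          gcongr
          linarith [hmin u h, Jfun_sub_mul (δ := δ) (E := E) (C := C) u]
      _ = E u := hylenicRatio_mul_abs h

theorem energy_le_of_Jfun_le (hδ : 0 ≤ δ) {u v : α} (hu : C u ≠ 0) (huv : |C u| = |C v|)
    (h : Jfun E C δ u ≤ Jfun E C δ v) : E u ≤ E v := by
  simp only [Jfun, hylenicRatio, ← huv] at h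
  by_contra! hlt
  have : E v / |C u| < E u / |C u| := div_lt_div_of_pos_right hlt (abs_pos.2 hu)
  nlinarith

variable {ι : Type*} {l : Filter ι} {U : ι → α}

theorem tendsto_hylenicRatio {e : ℝ} (hJ : Tendsto (fun k => Jfun E C δ (U k)) l (𝓝 m))
    (hEU : Tendsto (fun k => E (U k)) l (𝓝 e)) :
    Tendsto (fun k => hylenicRatio E C (U k)) l (𝓝 (m - δ * e)) := by
  simpa only [Jfun_sub_mul] using hJ.sub (hEU.const_mul δ)

theorem tendsto_energy_zero {r : ℝ} (hΛ : Tendsto (fun k => hylenicRatio E C (U k)) l (𝓝 r))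
    (hC : ∀ᶠ k in l, C (U k) ≠ 0) (hc : Tendsto (fun k => |C (U k)|) l (𝓝 0)) :
    Tendsto (fun k => E (U k)) l (𝓝 0) := by
  simpa only [mul_zero] using
    (hΛ.mul hc).congr' (hC.mono fun k hk => hylenicRatio_mul_abs hk)

theorem charge_ne_zero_and_Jfun_eq [TopologicalSpace α] [l.NeBot] (hEc : Continuous E)
    (hCc : Continuous C) {w : α} (hw : 0 < E w) (hC : ∀ᶠ k in l, C (U k) ≠ 0)
    (hJ : Tendsto (fun k => Jfun E C δ (U k)) l (𝓝 m)) (hU : Tendsto U l (𝓝 w)) :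
    C w ≠ 0 ∧ Jfun E C δ w = m := by
  have hEU : Tendsto (fun k => E (U k)) l (𝓝 (E w)) := (hEc.tendsto w).comp hU
  have hCU : Tendsto (fun k => |C (U k)|) l (𝓝 |C w|) := ((hCc.tendsto w).comp hU).abs
  have hCw : C w ≠ 0 := by
    intro h0
    rw [h0, abs_zero] at hCU
    exact hw.ne' (tendsto_nhds_unique hEU
      (tendsto_energy_zero (tendsto_hylenicRatio hJ hEU) hC hCU))
  exact ⟨hCw, tendsto_nhds_unique ((hEU.div hCU (abs_ne_zero.2 hCw)).add (hEU.const_mul δ)) hJ⟩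

end HylenicRatio

section Hylomorphy

variable {G : Subgroup (X ≃ₗᵢ[ℝ] X)} {E C : X → ℝ} {δ m : ℝ}

theorem Jfun_map (hEG : ∀ g : G, ∀ u : X, E ((g : X ≃ₗᵢ[ℝ] X) u) = E u)
    (hCG : ∀ g : G, ∀ u : X, C ((g : X ≃ₗᵢ[ℝ] X) u) = C u) (g : G) (u : X) :
    Jfun E C δ ((g : X ≃ₗᵢ[ℝ] X) u) = Jfun E C δ u := by
  simp only [Jfun, hylenicRatio, hEG, hCG]

theorem Lambda0_le_liminf (hE : ∀ u, 0 ≤ E u) {z : ℕ → X} (hz : GVanishing G z)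
    (hC : ∀ n, C (z n) ≠ 0) :
    Lambda0 G E C ≤ liminf (fun n => hylenicRatio E C (z n)) atTop := by
  refine csInf_le ⟨0, ?_⟩ ⟨z, hz, hC, rfl⟩
  rintro l ⟨u, -, -, rfl⟩
  exact liminf_nonneg_of_eventually_nonneg
    (Eventually.of_forall fun n => hylenicRatio_nonneg hE _)

theorem not_gVanishing_of_tendsto (hE : ∀ u, 0 ≤ E u) (hδ : 0 ≤ δ) (hm : m < Lambda0 G E C)
    {z : ℕ → X} (hC : ∀ n, C (z n) ≠ 0) (hJ : Tendsto (fun n => Jfun E C δ (z n)) atTop (𝓝 m)) :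
    ¬ GVanishing G z := by
  intro hz
  have hΛJ : liminf (fun n => hylenicRatio E C (z n)) atTop ≤ m := by
    rw [← hJ.liminf_eq]
    exact liminf_le_liminf
      (Eventually.of_forall fun n => le_add_of_nonneg_right (mul_nonneg hδ (hE _)))
      ⟨0, eventually_map.2 (Eventually.of_forall fun n => hylenicRatio_nonneg hE _)⟩
      hJ.isBoundedUnder_le.isCoboundedUnder_ge
  linarith [Lambda0_le_liminf hE hz hC]

section Splitting

variable (hE : ∀ u, 0 ≤ E u) (hEs : SplittingProperty E) (hCs : SplittingProperty C)
  (hδ : 0 < δ) (hmin : ∀ u, C u ≠ 0 → m ≤ Jfun E C δ u)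
  {U : ℕ → X} {w : X} {e : ℝ} (hC : ∀ᶠ k in atTop, C (U k) ≠ 0)
  (hJ : Tendsto (fun k => Jfun E C δ (U k)) atTop (𝓝 m))
  (hEU : Tendsto (fun k => E (U k)) atTop (𝓝 e)) (hUw : WeakNullSeq fun k => U k - w)
include hE hEs hCs hδ hmin hC hJ hEU hUw

/-- If `E w < e`, both `w` and `U k - w` carry a ratio `E / |C|` bounded away above the limit of
`E / |C|` along `U`; by splitting, this forces `|C (U k)| → 0` and hence `E (U k) → 0`. -/
theorem energy_eq_of_weakNullSeq_sub (hw : 0 < E w) : E w = e := by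
  have hrest := hEs.tendsto_sub hUw hEU
  have hwe : E w ≤ e := sub_nonneg.1 (ge_of_tendsto' hrest fun k => hE _)
  refine hwe.antisymm (not_lt.1 fun hlt => ?_)
  have hΛ := tendsto_hylenicRatio hJ hEU
  obtain ⟨κ, hκl, hκ⟩ : ∃ κ, m - δ * e < κ ∧ κ < min (m - δ * E w) (m - δ * (e - E w)) :=
    exists_between (lt_min (by nlinarith) (by nlinarith))
  have hκ0 : 0 ≤ κ := (ge_of_tendsto' hΛ fun k => hylenicRatio_nonneg hE _).trans hκl.le
  have hβ : ∀ᶠ k in atTop, κ ≤ m - δ * E (U k - w) :=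
    (tendsto_const_nhds.sub (hrest.const_mul δ)).eventually
      (eventually_ge_nhds (hκ.trans_le (min_le_right _ _)))
  have hkey : ∀ᶠ k in atTop, (κ - hylenicRatio E C (U k)) * |C (U k)| ≤
      κ * |C (U k) - C w - C (U k - w)| - (E (U k) - E w - E (U k - w)) := by
    filter_upwards [hC, hβ] with k hCk hβk
    have h₁ := hylenicRatio_mul_abs (E := E) hCk
    have h₂ : κ * |C w| ≤ E w :=
      (mul_le_mul_of_nonneg_right (hκ.le.trans (min_le_left _ _)) (abs_nonneg _)).trans
        (sub_mul_mul_abs_le hE hmin w)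
    have h₃ : κ * |C (U k - w)| ≤ E (U k - w) :=
      (mul_le_mul_of_nonneg_right hβk (abs_nonneg _)).trans (sub_mul_mul_abs_le hE hmin _)
    have h₄ : |C (U k)| ≤ |C w| + |C (U k - w)| + |C (U k) - C w - C (U k - w)| :=
      calc |C (U k)| = |C w + C (U k - w) + (C (U k) - C w - C (U k - w))| := by ring_nf
        _ ≤ _ := abs_add_three _ _ _
    nlinarith [mul_le_mul_of_nonneg_left h₄ hκ0]
  have hc : Tendsto (fun k => |C (U k)|) atTop (𝓝 0) := by
    refine tendsto_zero_of_sub_mul_le hΛ hκl (fun k => abs_nonneg _) ?_ hkey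
    simpa using ((hCs.tendsto_sub_sub hUw).abs.const_mul κ).sub (hEs.tendsto_sub_sub hUw)
  have he0 : e = 0 := tendsto_nhds_unique hEU (tendsto_energy_zero hΛ hC hc)
  linarith

theorem tendsto_of_weakNullSeq_sub
    (hEzero : ∀ u : ℕ → X, Tendsto (fun n => E (u n)) atTop (𝓝 0) →
      Tendsto (fun n => ‖u n‖) atTop (𝓝 0))
    (hw : 0 < E w) : Tendsto U atTop (𝓝 w) := by
  have h₀ := hEs.tendsto_sub hUw hEU
  rw [energy_eq_of_weakNullSeq_sub hE hEs hCs hδ hmin hC hJ hEU hUw hw, sub_self] at h₀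
  exact tendsto_sub_nhds_zero_iff.1 (tendsto_zero_iff_norm_tendsto_zero.2 (hEzero _ h₀))

end Splitting

end Hylomorphy

section Compactness

variable [CompleteSpace X] {G : Subgroup (X ≃ₗᵢ[ℝ] X)} {E C : X → ℝ} {δ m : ℝ}
  (hEc : Continuous E) (hCc : Continuous C)
  (hEG : ∀ g : G, ∀ u : X, E ((g : X ≃ₗᵢ[ℝ] X) u) = E u)
  (hCG : ∀ g : G, ∀ u : X, C ((g : X ≃ₗᵢ[ℝ] X) u) = C u)
  (hE : ∀ u, 0 ≤ E u) (hEpos : ∀ u : X, u ≠ 0 → 0 < E u)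
  (hEs : SplittingProperty E) (hCs : SplittingProperty C)
  (hEcoer : ∀ u : ℕ → X, Tendsto (fun n => ‖u n‖) atTop atTop →
    Tendsto (fun n => E (u n)) atTop atTop)
  (hEzero : ∀ u : ℕ → X, Tendsto (fun n => E (u n)) atTop (𝓝 0) →
    Tendsto (fun n => ‖u n‖) atTop (𝓝 0))
  (hδ : 0 < δ)
include hEc hCc hEG hCG hE hEpos hEs hCs hEcoer hEzero hδ

theorem exists_subseq_map_tendsto_minimizer (hmin : ∀ u, C u ≠ 0 → m ≤ Jfun E C δ u)
    (hm : m < Lambda0 G E C) {z : ℕ → X} (hC : ∀ᶠ n in atTop, C (z n) ≠ 0)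
    (hJ : Tendsto (fun n => Jfun E C δ (z n)) atTop (𝓝 m)) :
    ∃ φ : ℕ → ℕ, StrictMono φ ∧ ∃ g : ℕ → G, ∃ w : X, C w ≠ 0 ∧ Jfun E C δ w = m ∧
      Tendsto (fun k => (g k : X ≃ₗᵢ[ℝ] X) (z (φ k))) atTop (𝓝 w) := by
  obtain ⟨R, hR⟩ := exists_norm_le_of_le hEcoer ((m + 1) / δ)
  have hEb : ∀ᶠ n in atTop, E (z n) ≤ (m + 1) / δ :=
    (hJ.eventually (eventually_le_nhds (lt_add_one m))).mono fun n hn =>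
      (le_div_iff₀' hδ).2 ((mul_le_Jfun hE _).trans hn)
  obtain ⟨N, hN⟩ := eventually_atTop.1 (hC.and hEb)
  have hCN : ∀ n, C (z (n + N)) ≠ 0 := fun n => (hN _ (Nat.le_add_left N n)).1
  have hEN : ∀ n, E (z (n + N)) ≤ (m + 1) / δ := fun n => (hN _ (Nat.le_add_left N n)).2
  have hJN := hJ.comp (tendsto_add_atTop_nat N)
  have hvan := not_gVanishing_of_tendsto hE hδ.le hm hCN hJN
  obtain ⟨φ₁, hφ₁, g, hg⟩ : ∃ φ₁ : ℕ → ℕ, StrictMono φ₁ ∧ ∃ g : ℕ → G,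
      ¬ WeakNullSeq fun k => (g k : X ≃ₗᵢ[ℝ] X) (z (φ₁ k + N)) := by
    have h := not_and.1 hvan ⟨R, fun n => hR _ (hEN n)⟩
    push Not at h
    exact h
  obtain ⟨φ₂, hφ₂, w, hw0, hw⟩ := exists_subseq_weakNullSeq_sub_ne_zero
    (fun k => ((g k).1.norm_map _).trans_le (hR _ (hEN _))) hg
  obtain ⟨e, -, φ₃, hφ₃, he⟩ := tendsto_subseq_of_bounded (Metric.isBounded_Icc 0 ((m + 1) / δ))
    (x := fun k => E ((g (φ₂ k) : X ≃ₗᵢ[ℝ] X) (z (φ₁ (φ₂ k) + N))))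
    fun k => ⟨hE _, (hEG _ _).trans_le (hEN _)⟩
  set φ : ℕ → ℕ := fun k => φ₁ (φ₂ (φ₃ k)) + N
  have hφ : StrictMono φ := fun a b hab => by simpa [φ] using hφ₁ (hφ₂ (hφ₃ hab))
  set U : ℕ → X := fun k => (g (φ₂ (φ₃ k)) : X ≃ₗᵢ[ℝ] X) (z (φ k))
  have hUC : ∀ᶠ k in atTop, C (U k) ≠ 0 := Eventually.of_forall fun k => by
    simpa only [U, hCG] using hCN _
  have hUJ : Tendsto (fun k => Jfun E C δ (U k)) atTop (𝓝 m) :=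
    (hJ.comp hφ.tendsto_atTop).congr fun k => (Jfun_map hEG hCG _ _).symm
  have hUw : WeakNullSeq fun k => U k - w := hw.comp hφ₃.tendsto_atTop
  have hEw := hEpos w hw0
  have hU := tendsto_of_weakNullSeq_sub hE hEs hCs hδ hmin hUC hUJ he hUw hEzero hEw
  obtain ⟨hCw, hJw⟩ := charge_ne_zero_and_Jfun_eq hEc hCc hEw hUC hUJ hU
  exact ⟨φ, hφ, fun k => g (φ₂ (φ₃ k)), w, hCw, hJw, hU⟩

theorem exists_minimizer
    (hδ' : ∃ δ' : ℝ, δ < δ' ∧ ∃ v : X, C v ≠ 0 ∧ Jfun E C δ' v < Lambda0 G E C) :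
    ∃ w₀ : X, C w₀ ≠ 0 ∧ (∀ u, C u ≠ 0 → Jfun E C δ w₀ ≤ Jfun E C δ u) ∧
      Jfun E C δ w₀ < Lambda0 G E C := by
  obtain ⟨δ', hδδ', v, hCv, hJv⟩ := hδ'
  set S := Jfun E C δ '' {u | C u ≠ 0}
  have hS : BddBelow S := ⟨0, by
    rintro _ ⟨u, -, rfl⟩
    exact (mul_nonneg hδ.le (hE u)).trans (mul_le_Jfun hE u)⟩
  have hmin : ∀ u, C u ≠ 0 → sInf S ≤ Jfun E C δ u := fun u hu => csInf_le hS ⟨u, hu, rfl⟩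
  have hm : sInf S < Lambda0 G E C := by
    refine (hmin v hCv).trans_lt (lt_of_le_of_lt ?_ hJv)
    simp only [Jfun]
    gcongr
    exact hE v
  obtain ⟨s, -, hs, hsS⟩ := exists_seq_tendsto_sInf (S := S) ⟨_, v, hCv, rfl⟩ hS
  choose z hCz hz using hsS
  obtain ⟨-, -, -, w₀, hCw₀, hJw₀, -⟩ := exists_subseq_map_tendsto_minimizer hEc hCc hEG hCG hE
    hEpos hEs hCs hEcoer hEzero hδ hmin hm (Eventually.of_forall hCz) (by simpa only [hz] using hs)
  exact ⟨w₀, hCw₀, hJw₀ ▸ hmin, hJw₀ ▸ hm⟩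

theorem exists_subseq_map_tendsto_of_tendsto_energy_charge {w₀ : X} (hCw₀ : C w₀ ≠ 0)
    (hmin : ∀ u, C u ≠ 0 → Jfun E C δ w₀ ≤ Jfun E C δ u) (hm : Jfun E C δ w₀ < Lambda0 G E C)
    {v : ℕ → X} (hv : Tendsto (fun n => (E (v n), |C (v n)|)) atTop (𝓝 (E w₀, |C w₀|))) :
    ∃ φ : ℕ → ℕ, StrictMono φ ∧ ∃ g : ℕ → G, ∃ w : X, (E w, |C w|) = (E w₀, |C w₀|) ∧
      Tendsto (fun k => (g k : X ≃ₗᵢ[ℝ] X) (v (φ k))) atTop (𝓝 w) := by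
  have hEv : Tendsto (fun n => E (v n)) atTop (𝓝 (E w₀)) := (continuous_fst.tendsto _).comp hv
  have hCv : Tendsto (fun n => |C (v n)|) atTop (𝓝 |C w₀|) := (continuous_snd.tendsto _).comp hv
  have hC : ∀ᶠ n in atTop, C (v n) ≠ 0 :=
    (hCv.eventually_ne (abs_ne_zero.2 hCw₀)).mono fun n => abs_ne_zero.1
  have hJ : Tendsto (fun n => Jfun E C δ (v n)) atTop (𝓝 (Jfun E C δ w₀)) :=
    (hEv.div hCv (abs_ne_zero.2 hCw₀)).add (hEv.const_mul δ)
  obtain ⟨φ, hφ, g, w, -, -, hw⟩ := exists_subseq_map_tendsto_minimizer hEc hCc hEG hCG hE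
    hEpos hEs hCs hEcoer hEzero hδ hmin hm hC hJ
  refine ⟨φ, hφ, g, w, tendsto_nhds_unique ?_ (hv.comp hφ.tendsto_atTop), hw⟩
  simpa only [Function.comp_def, hEG, hCG] using ((hEc.prodMk hCc.abs).tendsto w).comp hw

end Compactness

section Stability

open Metric

theorem exists_pos_forall_infDist_le_of_tendsto {α T : Type*} [PseudoMetricSpace α] {Γ : Set α}
    {γ : T → α → α}
    (h : ∀ (u : ℕ → α) (t : ℕ → T), Tendsto (fun n => infDist (u n) Γ) atTop (𝓝 0) →
      Tendsto (fun n => infDist (γ (t n) (u n)) Γ) atTop (𝓝 0))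
    {ε : ℝ} (hε : 0 < ε) : ∃ η > 0, ∀ u, infDist u Γ ≤ η → ∀ t, infDist (γ t u) Γ ≤ ε := by
  by_contra! hc
  choose u hu t ht using fun n : ℕ => hc (1 / (n + 1)) Nat.one_div_pos_of_nat
  have hu0 := squeeze_zero (fun _ => infDist_nonneg) hu tendsto_one_div_add_atTop_nhds_zero_nat
  obtain ⟨n, hn⟩ := ((h u t hu0).eventually (gt_mem_nhds hε)).exists
  exact (ht n).not_gt hn

variable {V : Type*} [NormedAddCommGroup V] [NormedSpace ℝ V] {G : Subgroup (V ≃ₗᵢ[ℝ] V)}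

theorem infDist_le_dist_map {Γ : Set V} (hΓ : ∀ g : G, ∀ u ∈ Γ, (g : V ≃ₗᵢ[ℝ] V) u ∈ Γ)
    (g : G) (u : V) {w : V} (hw : w ∈ Γ) : infDist u Γ ≤ dist ((g : V ≃ₗᵢ[ℝ] V) u) w := by
  calc infDist u Γ ≤ dist u ((g : V ≃ₗᵢ[ℝ] V).symm w) := infDist_le_dist_of_mem (hΓ g⁻¹ w hw)
    _ = dist ((g : V ≃ₗᵢ[ℝ] V) u) w := by
      rw [← (g : V ≃ₗᵢ[ℝ] V).dist_map, LinearIsometryEquiv.apply_symm_apply]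

theorem tendsto_infDist_preimage_iff {Y : Type*} [TopologicalSpace Y] {Φ : V → Y}
    (hΦ : Continuous Φ) (hΦG : ∀ g : G, ∀ u, Φ ((g : V ≃ₗᵢ[ℝ] V) u) = Φ u) {p : Y}
    (hne : ∃ u, Φ u = p)
    (hcpt : ∀ v : ℕ → V, Tendsto (fun n => Φ (v n)) atTop (𝓝 p) → ∃ φ : ℕ → ℕ, StrictMono φ ∧
      ∃ g : ℕ → G, ∃ w, Φ w = p ∧ Tendsto (fun k => (g k : V ≃ₗᵢ[ℝ] V) (v (φ k))) atTop (𝓝 w))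
    {v : ℕ → V} :
    Tendsto (fun n => infDist (v n) (Φ ⁻¹' {p})) atTop (𝓝 0) ↔
      Tendsto (fun n => Φ (v n)) atTop (𝓝 p) := by
  have hΓ : ∀ g : G, ∀ u ∈ Φ ⁻¹' {p}, (g : V ≃ₗᵢ[ℝ] V) u ∈ Φ ⁻¹' {p} :=
    fun g u hu => (hΦG g u).trans hu
  refine ⟨fun hd => tendsto_of_subseq_tendsto fun ns hns => ?_,
    fun hv => tendsto_of_subseq_tendsto fun ns hns => ?_⟩
  · have hq : ∀ n, ∃ q ∈ Φ ⁻¹' {p}, dist (v n) q < infDist (v n) (Φ ⁻¹' {p}) + 1 / (n + 1) :=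
      fun n => (infDist_lt_iff hne).1 (lt_add_of_pos_right _ Nat.one_div_pos_of_nat)
    choose q hqΓ hq using hq
    obtain ⟨φ, hφ, g, w, hw, hgq⟩ := hcpt (fun k => q (ns k))
      (tendsto_const_nhds.congr fun n => (hqΓ (ns n) : Φ (q (ns n)) = p).symm)
    refine ⟨φ, ?_⟩
    have hvq : Tendsto (fun k => dist (v (ns (φ k))) (q (ns (φ k)))) atTop (𝓝 0) := by
      refine squeeze_zero (fun _ => dist_nonneg) (fun k => (hq _).le) ?_
      simpa [Function.comp_def] using (hd.add tendsto_one_div_add_atTop_nhds_zero_nat).comp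
        (hns.comp hφ.tendsto_atTop)
    have hgv : Tendsto (fun k => (g k : V ≃ₗᵢ[ℝ] V) (v (ns (φ k)))) atTop (𝓝 w) := by
      refine tendsto_iff_dist_tendsto_zero.2 (squeeze_zero (fun _ => dist_nonneg)
        (fun k => (dist_triangle _ ((g k : V ≃ₗᵢ[ℝ] V) (q (ns (φ k)))) w)) ?_)
      simpa only [LinearIsometryEquiv.dist_map, add_zero] using
        hvq.add (tendsto_iff_dist_tendsto_zero.1 hgq)
    simpa only [Function.comp_def, hΦG, hw] using (hΦ.tendsto w).comp hgv
  · obtain ⟨φ, -, g, w, hw, hgv⟩ := hcpt (fun k => v (ns k)) (hv.comp hns)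
    exact ⟨φ, squeeze_zero (fun _ => infDist_nonneg)
      (fun k => infDist_le_dist_map hΓ (g k) _ hw) (tendsto_iff_dist_tendsto_zero.1 hgv)⟩

end Stability

theorem stmt_12_general [CompleteSpace X] (G : Subgroup (X ≃ₗᵢ[ℝ] X)) (E C : X → ℝ)
    (hEc : Continuous E) (hCc : Continuous C)
    (hEG : ∀ g : G, ∀ u : X, E ((g : X ≃ₗᵢ[ℝ] X) u) = E u)
    (hCG : ∀ g : G, ∀ u : X, C ((g : X ≃ₗᵢ[ℝ] X) u) = C u)
    (hE0 : E 0 = 0) (hC0 : C 0 = 0)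
    (hEs : SplittingProperty E) (hCs : SplittingProperty C)
    (hEpos : ∀ u : X, u ≠ 0 → 0 < E u)
    (hEcoer : ∀ u : ℕ → X, Tendsto (fun n => ‖u n‖) atTop atTop →
      Tendsto (fun n => E (u n)) atTop atTop)
    (hEzero : ∀ u : ℕ → X, Tendsto (fun n => E (u n)) atTop (𝓝 0) →
      Tendsto (fun n => ‖u n‖) atTop (𝓝 0))
    (γ : ℝ → X → X)
    (hγE : ∀ t : ℝ, ∀ u : X, E (γ t u) = E u)
    (hγC : ∀ t : ℝ, ∀ u : X, C (γ t u) = C u)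
    (δ : ℝ) (hδ : MemDeltaInterval G E C δ) :
    ∃ eδ cδ : ℝ, 0 < eδ ∧ 0 < cδ ∧
      ∃ Γ : Set X, Γ = {u : X | E u = eδ ∧ |C u| = cδ} ∧
        Γ.Nonempty ∧
        (0 : X) ∉ Γ ∧
        (∀ u ∈ Γ, ∀ t : ℝ, γ t u ∈ Γ) ∧
        (∀ u : ℕ → X, (∀ n, u n ∈ Γ) → GCompactSeq G u) ∧
        (∀ u ∈ Γ, ∀ v : X, |C v| = cδ → E u ≤ E v) ∧
        (∀ ε : ℝ, 0 < ε → ∃ η : ℝ, 0 < η ∧ ∀ u : X, Metric.infDist u Γ ≤ η →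
          ∀ t : ℝ, 0 ≤ t → Metric.infDist (γ t u) Γ ≤ ε) := by
  have hE : ∀ u, 0 ≤ E u := fun u =>
    (eq_or_ne u 0).elim (fun h => h ▸ hE0.ge) fun h => (hEpos u h).le
  obtain ⟨w₀, hCw₀, hmin, hm⟩ := exists_minimizer hEc hCc hEG hCG hE hEpos hEs hCs hEcoer hEzero
    hδ.1 hδ.2
  have hEw₀ : 0 < E w₀ := hEpos w₀ fun h => hCw₀ (h ▸ hC0)
  set Φ : X → ℝ × ℝ := fun u => (E u, |C u|)
  have hcpt := fun v => exists_subseq_map_tendsto_of_tendsto_energy_charge hEc hCc hEG hCG hE hEpos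
    hEs hCs hEcoer hEzero hδ.1 hCw₀ hmin hm (v := v)
  have hdist := fun v => tendsto_infDist_preimage_iff (hEc.prodMk hCc.abs)
    (fun g u => by simp only [hEG, hCG]) ⟨w₀, rfl⟩ hcpt (v := v)
  refine ⟨E w₀, |C w₀|, hEw₀, abs_pos.2 hCw₀, Φ ⁻¹' {Φ w₀}, Set.ext fun u => Prod.ext_iff,
    ⟨w₀, rfl⟩, fun h => hEw₀.ne (hE0 ▸ congrArg Prod.fst h), fun u hu t => ?_,
    fun u hu => ?_, fun u hu v hv => ?_, fun ε hε => ?_⟩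
  · simpa only [Set.mem_preimage, Φ, hγE, hγC] using hu
  · obtain ⟨φ, hφ, g, w, -, hw⟩ := hcpt u (tendsto_const_nhds.congr fun n => (hu n).symm)
    exact ⟨φ, hφ, g, w, hw⟩
  · exact (congrArg Prod.fst hu).trans_le (energy_le_of_Jfun_le hδ.1.le hCw₀ hv.symm
      (hmin v (abs_ne_zero.1 (hv.trans_ne (abs_ne_zero.2 hCw₀)))))
  · obtain ⟨η, hη, h⟩ := exists_pos_forall_infDist_le_of_tendsto (γ := γ) (fun u t hu =>
      (hdist _).2 (by simpa only [Φ, hγE, hγC] using (hdist u).1 hu)) hε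
    exact ⟨η, hη, fun u hu t _ => h u hu t⟩

/-- Abstract existence theorem for hylomorphic solitons (Theorem `astra1`):
under (EC-0)–(EC-3) and the hylomorphy condition, if the evolution `γ`
preserves `E` and `C`, then for every `δ ∈ (0, δ_∞)` there are `e_δ, c_δ > 0`
such that `Γ(e_δ, c_δ) = {u | E u = e_δ ∧ |C u| = c_δ}` is nonempty, does not
contain `0`, is invariant, `G`-compact, consists of minimizers of `E` on
`{u | |C u| = c_δ}`, and is stable. -/
theorem stmt_12 [CompleteSpace X] (G : Subgroup (X ≃ₗᵢ[ℝ] X)) (E C : X → ℝ)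
    (hEc : Continuous E) (hCc : Continuous C)
    (hEG : ∀ g : G, ∀ u : X, E ((g : X ≃ₗᵢ[ℝ] X) u) = E u)
    (hCG : ∀ g : G, ∀ u : X, C ((g : X ≃ₗᵢ[ℝ] X) u) = C u)
    (hE0 : E 0 = 0) (hC0 : C 0 = 0)
    (hEs : SplittingProperty E) (hCs : SplittingProperty C)
    (hEpos : ∀ u : X, u ≠ 0 → 0 < E u)
    (hEcoer : ∀ u : ℕ → X, Tendsto (fun n => ‖u n‖) atTop atTop →
      Tendsto (fun n => E (u n)) atTop atTop)
    (hEzero : ∀ u : ℕ → X, Tendsto (fun n => E (u n)) atTop (𝓝 0) →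
      Tendsto (fun n => ‖u n‖) atTop (𝓝 0))
    (hhylo : HylomorphyCondition G E C)
    (γ : ℝ → X → X)
    (hγE : ∀ t : ℝ, ∀ u : X, E (γ t u) = E u)
    (hγC : ∀ t : ℝ, ∀ u : X, C (γ t u) = C u)
    (δ : ℝ) (hδ : MemDeltaInterval G E C δ) :
    ∃ eδ cδ : ℝ, 0 < eδ ∧ 0 < cδ ∧
      ∃ Γ : Set X, Γ = {u : X | E u = eδ ∧ |C u| = cδ} ∧
        Γ.Nonempty ∧
        (0 : X) ∉ Γ ∧
        (∀ u ∈ Γ, ∀ t : ℝ, γ t u ∈ Γ) ∧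
        (∀ u : ℕ → X, (∀ n, u n ∈ Γ) → GCompactSeq G u) ∧
        (∀ u ∈ Γ, ∀ v : X, |C v| = cδ → E u ≤ E v) ∧
        (∀ ε : ℝ, 0 < ε → ∃ η : ℝ, 0 < η ∧ ∀ u : X, Metric.infDist u Γ ≤ η →
          ∀ t : ℝ, 0 ≤ t → Metric.infDist (γ t u) Γ ≤ ε) :=
  stmt_12_general G E C hEc hCc hEG hCG hE0 hC0 hEs hCs hEpos hEcoer hEzero γ hγE hγC δ hδ
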